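/- arXiv:2103.07867 — 3 statements merged into one kernel-verified Lean document; each statement's English description precedes it below -/
import Mathlib

section
/- If constants P^{γαβ} (γ, α, β ∈ {0,1,2}) satisfy the null condition P^{γαβ}ξ_γ ξ_α ξ_β = 0 for all ξ with ξ₀² = ξ₁² + ξ₂², then on the cone K = {t ≥ |x| + 1} with Ψ⁰₀ = t/s, Ψ⁰ₐ = -xₐ/s, one has |P^{γαβ} Ψ⁰_γ Ψ⁰_α Ψ⁰_β| ≤ C·(t/s) for a constant C depending only on the P^{γαβ}. -/
/-!
Let `v = (t, -x₁, -x₂)` and let `w = (r, -x₁, -x₂)` be the null vector obtained by replacing `t`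
with `r = |x|`. The null condition kills the cubic form at `w`, and `v - w = (t - r, 0, 0)`, so
the cubic form at `v` is `O((t - r) t²)`. Dividing by `s³` and using `(t - r) t ≤ t² - r² = s²`
gives the bound `O(t / s)`.
-/

/-- The null condition for constants `P^{γαβ}` in two space dimensions. -/
def NullCond (P : Fin 3 → Fin 3 → Fin 3 → ℝ) : Prop :=
  ∀ ξ : Fin 3 → ℝ, ξ 0 ^ 2 = ξ 1 ^ 2 + ξ 2 ^ 2 →
    ∑ γ : Fin 3, ∑ α : Fin 3, ∑ β : Fin 3, P γ α β * ξ γ * ξ α * ξ β = 0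

open Finset

section CubicForm

variable {ι : Type*} [Fintype ι]

def cubicForm (P : ι → ι → ι → ℝ) (ξ : ι → ℝ) : ℝ :=
  ∑ γ, ∑ α, ∑ β, P γ α β * ξ γ * ξ α * ξ β

theorem cubicForm_div (P : ι → ι → ι → ℝ) (ξ : ι → ℝ) (c : ℝ) :
    cubicForm P (fun i => ξ i / c) = cubicForm P ξ / c ^ 3 := by
  simp only [cubicForm, sum_div]
  congr! 3
  ring

theorem abs_mul_mul_sub_mul_mul_le {a b c a' b' c' d M : ℝ}
    (ha : |a - a'| ≤ d) (hb : |b - b'| ≤ d) (hc : |c - c'| ≤ d)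
    (hb_le : |b| ≤ M) (hc_le : |c| ≤ M) (ha'_le : |a'| ≤ M) (hb'_le : |b'| ≤ M) :
    |a * b * c - a' * b' * c'| ≤ 3 * d * M ^ 2 := by
  have hM : 0 ≤ M := (abs_nonneg b).trans hb_le
  have hd : 0 ≤ d := (abs_nonneg _).trans ha
  have h₁ : |(a - a') * b * c| ≤ d * M * M := by
    rw [abs_mul, abs_mul]; gcongr
  have h₂ : |a' * (b - b') * c| ≤ M * d * M := by
    rw [abs_mul, abs_mul]; gcongr
  have h₃ : |a' * b' * (c - c')| ≤ M * M * d := by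
    rw [abs_mul, abs_mul]; gcongr
  calc |a * b * c - a' * b' * c'|
      = |(a - a') * b * c + a' * (b - b') * c + a' * b' * (c - c')| := by congr 1; ring
    _ ≤ |(a - a') * b * c| + |a' * (b - b') * c| + |a' * b' * (c - c')| := abs_add_three _ _ _
    _ ≤ 3 * d * M ^ 2 := by nlinarith

theorem abs_cubicForm_sub_le (P : ι → ι → ι → ℝ) {ξ ζ : ι → ℝ} {d M : ℝ}
    (hd : ∀ i, |ξ i - ζ i| ≤ d) (hξ : ∀ i, |ξ i| ≤ M) (hζ : ∀ i, |ζ i| ≤ M) :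
    |cubicForm P ξ - cubicForm P ζ| ≤ 3 * (∑ γ, ∑ α, ∑ β, |P γ α β|) * d * M ^ 2 := by
  have hterm : ∀ γ α β, |P γ α β * ξ γ * ξ α * ξ β - P γ α β * ζ γ * ζ α * ζ β|
      ≤ |P γ α β| * (3 * d * M ^ 2) := fun γ α β => by
    rw [show P γ α β * ξ γ * ξ α * ξ β - P γ α β * ζ γ * ζ α * ζ β
        = P γ α β * (ξ γ * ξ α * ξ β - ζ γ * ζ α * ζ β) by ring, abs_mul]
    exact mul_le_mul_of_nonneg_left
      (abs_mul_mul_sub_mul_mul_le (hd γ) (hd α) (hd β) (hξ α) (hξ β) (hζ γ) (hζ α))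
      (abs_nonneg _)
  calc |cubicForm P ξ - cubicForm P ζ|
      = |∑ γ, ∑ α, ∑ β, (P γ α β * ξ γ * ξ α * ξ β - P γ α β * ζ γ * ζ α * ζ β)| := by
        simp only [cubicForm, sum_sub_distrib]
    _ ≤ ∑ γ, ∑ α, ∑ β, |P γ α β * ξ γ * ξ α * ξ β - P γ α β * ζ γ * ζ α * ζ β| :=
        (abs_sum_le_sum_abs _ _).trans <| sum_le_sum fun _ _ =>
          (abs_sum_le_sum_abs _ _).trans <| sum_le_sum fun _ _ => abs_sum_le_sum_abs _ _
    _ ≤ ∑ γ, ∑ α, ∑ β, |P γ α β| * (3 * d * M ^ 2) :=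
        sum_le_sum fun γ _ => sum_le_sum fun α _ => sum_le_sum fun β _ => hterm γ α β
    _ = 3 * (∑ γ, ∑ α, ∑ β, |P γ α β|) * d * M ^ 2 := by
        simp only [← sum_mul]; ring

end CubicForm

theorem abs_cubicForm_le_of_nullCond {P : Fin 3 → Fin 3 → Fin 3 → ℝ} (hP : NullCond P)
    {t x1 x2 : ℝ} (hK : Real.sqrt (x1 ^ 2 + x2 ^ 2) ≤ t) :
    |cubicForm P ![t, -x1, -x2]|
      ≤ 3 * (∑ γ, ∑ α, ∑ β, |P γ α β|) * (t - Real.sqrt (x1 ^ 2 + x2 ^ 2)) * t ^ 2 := by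
  set r := Real.sqrt (x1 ^ 2 + x2 ^ 2)
  have hr : 0 ≤ r := Real.sqrt_nonneg _
  have hx1 : |x1| ≤ r := Real.abs_le_sqrt (by nlinarith)
  have hx2 : |x2| ≤ r := Real.abs_le_sqrt (by nlinarith)
  have hnull : cubicForm P ![r, -x1, -x2] = 0 :=
    hP _ (by simp [r, Real.sq_sqrt (by positivity : 0 ≤ x1 ^ 2 + x2 ^ 2)])
  have hv : ∀ i, |![t, -x1, -x2] i| ≤ t := by
    intro i; fin_cases i <;> simp [abs_of_nonneg (hr.trans hK)] <;> linarith
  have hw : ∀ i, |![r, -x1, -x2] i| ≤ t := by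
    intro i; fin_cases i <;> simp [abs_of_nonneg hr] <;> linarith
  have hvw : ∀ i, |![t, -x1, -x2] i - ![r, -x1, -x2] i| ≤ t - r := by
    intro i; fin_cases i <;> simp [abs_of_nonneg (sub_nonneg.2 hK)] <;> linarith
  simpa [hnull] using abs_cubicForm_sub_le P hvw hv hw

/-- if `P` is null, then on the cone `K = {t ≥ |x|+1}`, with
`Ψ⁰ = (t/s, -x₁/s, -x₂/s)` and `s = √(t²-|x|²)`, one has
`|P^{γαβ} Ψ⁰_γ Ψ⁰_α Ψ⁰_β| ≤ C (t/s)`. -/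
theorem stmt2 (P : Fin 3 → Fin 3 → Fin 3 → ℝ) (hP : NullCond P) :
    ∃ C > (0 : ℝ), ∀ t x1 x2 : ℝ, Real.sqrt (x1 ^ 2 + x2 ^ 2) + 1 ≤ t →
      |∑ γ : Fin 3, ∑ α : Fin 3, ∑ β : Fin 3,
          P γ α β * (![t, -x1, -x2] γ / Real.sqrt (t ^ 2 - x1 ^ 2 - x2 ^ 2))
            * (![t, -x1, -x2] α / Real.sqrt (t ^ 2 - x1 ^ 2 - x2 ^ 2))
            * (![t, -x1, -x2] β / Real.sqrt (t ^ 2 - x1 ^ 2 - x2 ^ 2))|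
        ≤ C * (t / Real.sqrt (t ^ 2 - x1 ^ 2 - x2 ^ 2)) := by
  set S := ∑ γ, ∑ α, ∑ β, |P γ α β|
  have hS : 0 ≤ S := sum_nonneg fun _ _ => sum_nonneg fun _ _ => sum_nonneg fun _ _ => abs_nonneg _
  refine ⟨3 * S + 1, by positivity, fun t x1 x2 hK => ?_⟩
  set r := Real.sqrt (x1 ^ 2 + x2 ^ 2)
  set s := Real.sqrt (t ^ 2 - x1 ^ 2 - x2 ^ 2)
  have hr : 0 ≤ r := Real.sqrt_nonneg _
  have hr2 : r ^ 2 = x1 ^ 2 + x2 ^ 2 := Real.sq_sqrt (by positivity)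
  have hs2 : s ^ 2 = t ^ 2 - r ^ 2 := by rw [Real.sq_sqrt] <;> nlinarith
  have hs : 0 < s := Real.sqrt_pos.2 (by nlinarith)
  have hcone : (t - r) * t ≤ s ^ 2 := by nlinarith
  have hform : |cubicForm P ![t, -x1, -x2]| ≤ 3 * S * (t - r) * t ^ 2 :=
    abs_cubicForm_le_of_nullCond hP (by linarith)
  change |cubicForm P (fun i => ![t, -x1, -x2] i / s)| ≤ _
  rw [cubicForm_div, abs_div, abs_of_pos (pow_pos hs 3), div_le_iff₀ (pow_pos hs 3)]
  calc |cubicForm P ![t, -x1, -x2]| ≤ 3 * S * ((t - r) * t) * t := by linarith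
    _ ≤ 3 * S * s ^ 2 * t := by gcongr; linarith
    _ ≤ (3 * S + 1) * s ^ 2 * t := by gcongr <;> linarith
    _ = (3 * S + 1) * (t / s) * s ^ 3 := by field_simp
end

section
/- Pointwise bound for null trilinear form with derivative estimates: let P^{γαβ} satisfy the null condition, and suppose on K = {t ≥ |x|+1} a smooth function w satisfies |∂ₛw| ≤ A/t and |∂̄ₐw| ≤ A·s^{δ-1}/t for a = 1,2 with A > 0, 0 < δ < 1. Then |P^{γαβ} ∂_γ w · Ψ⁰_α Ψ⁰_β| ≤ C·A·s^{δ-1} on K, with C depending only on P and δ. -/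
/-- Partial derivatives `∂₀ = ∂ₜ`, `∂₁`, `∂₂` of a function `u(t, x₁, x₂)`. -/
noncomputable def pd (i : Fin 3) (u : ℝ → ℝ → ℝ → ℝ) : ℝ → ℝ → ℝ → ℝ :=
  ![fun t x1 x2 => deriv (fun τ => u τ x1 x2) t,
    fun t x1 x2 => deriv (fun y => u t y x2) x1,
    fun t x1 x2 => deriv (fun y => u t x1 y) x2] i

/-- Smoothness of a function of `(t, x₁, x₂)`. -/
def Smooth3 (u : ℝ → ℝ → ℝ → ℝ) : Prop :=
  ContDiff ℝ (⊤ : ℕ∞) (fun p : ℝ × ℝ × ℝ => u p.1 p.2.1 p.2.2)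

private lemma abs_triple_sub {a b c a' b' c' K d : ℝ} (hd : 0 ≤ d)
    (hb : |b| ≤ K) (hc : |c| ≤ K) (ha' : |a'| ≤ K) (hb' : |b'| ≤ K)
    (h1 : |a - a'| ≤ d) (h2 : |b - b'| ≤ d) (h3 : |c - c'| ≤ d) :
    |a * b * c - a' * b' * c'| ≤ 3 * (d * K ^ 2) := by
  have hK : 0 ≤ K := le_trans (abs_nonneg _) hb
  have e : a * b * c - a' * b' * c'
      = (a - a') * b * c + a' * (b - b') * c + a' * b' * (c - c') := by ring
  have t1 : |(a - a') * b * c| ≤ d * K ^ 2 := by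
    rw [abs_mul, abs_mul]
    calc |a - a'| * |b| * |c| ≤ (d * K) * K :=
          mul_le_mul (mul_le_mul h1 hb (abs_nonneg b) hd) hc (abs_nonneg c)
            (by positivity)
      _ = d * K ^ 2 := by ring
  have t2 : |a' * (b - b') * c| ≤ d * K ^ 2 := by
    rw [abs_mul, abs_mul]
    calc |a'| * |b - b'| * |c| ≤ (K * d) * K :=
          mul_le_mul (mul_le_mul ha' h2 (abs_nonneg _) hK) hc (abs_nonneg c)
            (by positivity)
      _ = d * K ^ 2 := by ring
  have t3 : |a' * b' * (c - c')| ≤ d * K ^ 2 := by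
    rw [abs_mul, abs_mul]
    calc |a'| * |b'| * |c - c'| ≤ (K * K) * d :=
          mul_le_mul (mul_le_mul ha' hb' (abs_nonneg _) hK) h3 (abs_nonneg _)
            (by positivity)
      _ = d * K ^ 2 := by ring
  calc |a * b * c - a' * b' * c'|
      ≤ |(a - a') * b * c| + |a' * (b - b') * c| + |a' * b' * (c - c')| := by
        rw [e]; exact (abs_add_le _ _).trans (by linarith [abs_add_le ((a - a') * b * c) (a' * (b - b') * c)])
    _ ≤ 3 * (d * K ^ 2) := by linarith

private lemma nested_abs_le (f g : Fin 3 → Fin 3 → Fin 3 → ℝ)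
    (h : ∀ γ α β, |f γ α β| ≤ g γ α β) :
    |∑ γ : Fin 3, ∑ α : Fin 3, ∑ β : Fin 3, f γ α β|
      ≤ ∑ γ : Fin 3, ∑ α : Fin 3, ∑ β : Fin 3, g γ α β := by
  refine (Finset.abs_sum_le_sum_abs _ _).trans (Finset.sum_le_sum fun γ _ => ?_)
  refine (Finset.abs_sum_le_sum_abs _ _).trans (Finset.sum_le_sum fun α _ => ?_)
  exact (Finset.abs_sum_le_sum_abs _ _).trans (Finset.sum_le_sum fun β _ => h γ α β)

private lemma nested_sum_mul (g : Fin 3 → Fin 3 → Fin 3 → ℝ) (c : ℝ) :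
    (∑ γ : Fin 3, ∑ α : Fin 3, ∑ β : Fin 3, g γ α β * c)
      = (∑ γ : Fin 3, ∑ α : Fin 3, ∑ β : Fin 3, g γ α β) * c := by
  simp only [← Finset.sum_mul]

private lemma sum3_split (P : Fin 3 → Fin 3 → Fin 3 → ℝ) (ξ B T : Fin 3 → ℝ) (D : ℝ)
    (hT : ∀ γ, T γ = ξ γ * D + B γ) :
    ∑ γ : Fin 3, ∑ α : Fin 3, ∑ β : Fin 3, P γ α β * T γ * ξ α * ξ β
      = D * (∑ γ : Fin 3, ∑ α : Fin 3, ∑ β : Fin 3, P γ α β * ξ γ * ξ α * ξ β)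
        + ∑ γ : Fin 3, ∑ α : Fin 3, ∑ β : Fin 3, P γ α β * B γ * ξ α * ξ β := by
  simp only [Fin.sum_univ_three, hT 0, hT 1, hT 2]; ring

private lemma cubic_bound (P : Fin 3 → Fin 3 → Fin 3 → ℝ) (ξ ζ : Fin 3 → ℝ) (K d : ℝ)
    (hd : 0 ≤ d) (hξ : ∀ i, |ξ i| ≤ K) (hζ : ∀ i, |ζ i| ≤ K)
    (hdiff : ∀ i, |ξ i - ζ i| ≤ d)
    (hnull : ∑ γ : Fin 3, ∑ α : Fin 3, ∑ β : Fin 3, P γ α β * ζ γ * ζ α * ζ β = 0) :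
    |∑ γ : Fin 3, ∑ α : Fin 3, ∑ β : Fin 3, P γ α β * ξ γ * ξ α * ξ β|
      ≤ (∑ γ : Fin 3, ∑ α : Fin 3, ∑ β : Fin 3, |P γ α β|) * (3 * (d * K ^ 2)) := by
  have key : (∑ γ : Fin 3, ∑ α : Fin 3, ∑ β : Fin 3, P γ α β * ξ γ * ξ α * ξ β)
      = ∑ γ : Fin 3, ∑ α : Fin 3, ∑ β : Fin 3,
          (P γ α β * ξ γ * ξ α * ξ β - P γ α β * ζ γ * ζ α * ζ β) := by
    simp only [Finset.sum_sub_distrib]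
    rw [hnull, sub_zero]
  rw [key, ← nested_sum_mul (fun γ α β => |P γ α β|) (3 * (d * K ^ 2))]
  refine nested_abs_le _ _ fun γ α β => ?_
  have e : P γ α β * ξ γ * ξ α * ξ β - P γ α β * ζ γ * ζ α * ζ β
      = P γ α β * (ξ γ * ξ α * ξ β - ζ γ * ζ α * ζ β) := by ring
  rw [e, abs_mul]
  exact mul_le_mul_of_nonneg_left
    (abs_triple_sub hd (hξ α) (hξ β) (hζ γ) (hζ α) (hdiff γ) (hdiff α) (hdiff β))
    (abs_nonneg _)

private lemma sum2_bound (P : Fin 3 → Fin 3 → Fin 3 → ℝ) (B ξ : Fin 3 → ℝ) (K b : ℝ)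
    (hb : 0 ≤ b) (hK : 0 ≤ K) (hB : ∀ γ, |B γ| ≤ b) (hξ : ∀ i, |ξ i| ≤ K) :
    |∑ γ : Fin 3, ∑ α : Fin 3, ∑ β : Fin 3, P γ α β * B γ * ξ α * ξ β|
      ≤ (∑ γ : Fin 3, ∑ α : Fin 3, ∑ β : Fin 3, |P γ α β|) * (b * K ^ 2) := by
  rw [← nested_sum_mul (fun γ α β => |P γ α β|) (b * K ^ 2)]
  refine nested_abs_le _ _ fun γ α β => ?_
  rw [abs_mul, abs_mul, abs_mul]
  calc |P γ α β| * |B γ| * |ξ α| * |ξ β|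
      ≤ |P γ α β| * b * K * K := by
        refine mul_le_mul (mul_le_mul (mul_le_mul le_rfl (hB γ) (abs_nonneg _) (abs_nonneg _))
          (hξ α) (abs_nonneg _) (by positivity)) (hξ β) (abs_nonneg _) (by positivity)
    _ = |P γ α β| * (b * K ^ 2) := by ring


set_option maxHeartbeats 2000000 in
/-- if `P` is null and on `K = {t ≥ |x|+1}` one has
`|∂ₛw| ≤ A/t` (with `∂ₛ = (s/t)∂ₜ`) and `|∂̄ₐw| ≤ A s^{δ-1}/t`, then
`|P^{γαβ} ∂_γw Ψ⁰_α Ψ⁰_β| ≤ C A s^{δ-1}` on `K`, with `C = C(P, δ)`. -/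
theorem stmt14 (P : Fin 3 → Fin 3 → Fin 3 → ℝ) (hP : NullCond P)
    (δ : ℝ) (hδ0 : 0 < δ) (hδ1 : δ < 1) :
    ∃ C > (0 : ℝ), ∀ w : ℝ → ℝ → ℝ → ℝ, Smooth3 w → ∀ A : ℝ, 0 < A →
    (∀ t x1 x2 : ℝ, Real.sqrt (x1 ^ 2 + x2 ^ 2) + 1 ≤ t →
      |Real.sqrt (t ^ 2 - x1 ^ 2 - x2 ^ 2) / t * pd 0 w t x1 x2| ≤ A / t ∧
      |x1 / t * pd 0 w t x1 x2 + pd 1 w t x1 x2|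
          ≤ A * Real.sqrt (t ^ 2 - x1 ^ 2 - x2 ^ 2) ^ (δ - 1) / t ∧
      |x2 / t * pd 0 w t x1 x2 + pd 2 w t x1 x2|
          ≤ A * Real.sqrt (t ^ 2 - x1 ^ 2 - x2 ^ 2) ^ (δ - 1) / t) →
    ∀ t x1 x2 : ℝ, Real.sqrt (x1 ^ 2 + x2 ^ 2) + 1 ≤ t →
      |∑ γ : Fin 3, ∑ α : Fin 3, ∑ β : Fin 3,
          P γ α β * pd γ w t x1 x2
            * (![t, -x1, -x2] α / Real.sqrt (t ^ 2 - x1 ^ 2 - x2 ^ 2))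
            * (![t, -x1, -x2] β / Real.sqrt (t ^ 2 - x1 ^ 2 - x2 ^ 2))|
        ≤ C * A * Real.sqrt (t ^ 2 - x1 ^ 2 - x2 ^ 2) ^ (δ - 1) := by
  set M : ℝ := ∑ γ : Fin 3, ∑ α : Fin 3, ∑ β : Fin 3, |P γ α β| with hMdef
  have hM : 0 ≤ M := by
    refine Finset.sum_nonneg fun γ _ => Finset.sum_nonneg fun α _ =>
      Finset.sum_nonneg fun β _ => abs_nonneg _
  refine ⟨4 * M + 1, by linarith, ?_⟩
  intro w _hw A hA hbd t x1 x2 hK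
  have hb := hbd t x1 x2 hK
  set r : ℝ := Real.sqrt (x1 ^ 2 + x2 ^ 2) with hrdef
  set s : ℝ := Real.sqrt (t ^ 2 - x1 ^ 2 - x2 ^ 2) with hsdef
  have hr0 : 0 ≤ r := Real.sqrt_nonneg _
  have hrt : r + 1 ≤ t := hK
  have ht0 : (0:ℝ) < t := by linarith
  have hr2 : r ^ 2 = x1 ^ 2 + x2 ^ 2 := Real.sq_sqrt (by positivity)
  have hs2pos : (0:ℝ) < t ^ 2 - x1 ^ 2 - x2 ^ 2 := by nlinarith
  have hs0 : (0:ℝ) < s := Real.sqrt_pos.2 hs2pos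
  have hs2 : s ^ 2 = t ^ 2 - x1 ^ 2 - x2 ^ 2 := Real.sq_sqrt hs2pos.le
  have hx1 : |x1| ≤ r := by
    rw [← Real.sqrt_sq_eq_abs]
    exact Real.sqrt_le_sqrt (by nlinarith)
  have hx2 : |x2| ≤ r := by
    rw [← Real.sqrt_sq_eq_abs]
    exact Real.sqrt_le_sqrt (by nlinarith)
  have hs1 : (1:ℝ) ≤ s := by nlinarith
  have hst : s ≤ t := by nlinarith
  have hts2 : t ≤ s ^ 2 := by nlinarith
  have hrts : r ≤ t := by linarith
  -- the vectors
  set ξv : Fin 3 → ℝ := ![t / s, -x1 / s, -x2 / s] with hξdef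
  set ζv : Fin 3 → ℝ := ![r / s, -x1 / s, -x2 / s] with hζdef
  set D : ℝ := s / t * pd 0 w t x1 x2 with hDdef
  set Bv : Fin 3 → ℝ :=
    ![0, x1 / t * pd 0 w t x1 x2 + pd 1 w t x1 x2,
        x2 / t * pd 0 w t x1 x2 + pd 2 w t x1 x2] with hBdef
  have hξe : ∀ α : Fin 3, ![t, -x1, -x2] α / s = ξv α := by
    intro α
    fin_cases α <;> simp [hξdef, neg_div]
  have hT : ∀ γ : Fin 3, pd γ w t x1 x2 = ξv γ * D + Bv γ := by
    intro γ
    fin_cases γ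
    · show pd 0 w t x1 x2 = ξv 0 * D + Bv 0
      simp only [hξdef, hBdef, hDdef, Matrix.cons_val_zero]
      field_simp
      ring
    · show pd 1 w t x1 x2 = ξv 1 * D + Bv 1
      simp only [hξdef, hBdef, hDdef, Matrix.cons_val_one, Matrix.head_cons, Matrix.cons_val_zero]
      field_simp
      ring
    · show pd 2 w t x1 x2 = ξv 2 * D + Bv 2
      simp only [hξdef, hBdef, hDdef, Matrix.cons_val_two, Matrix.tail_cons,
        Matrix.head_cons, Matrix.cons_val_one]
      field_simp
      ring
  have grw : (∑ γ : Fin 3, ∑ α : Fin 3, ∑ β : Fin 3,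
        P γ α β * pd γ w t x1 x2 * (![t, -x1, -x2] α / s) * (![t, -x1, -x2] β / s))
      = ∑ γ : Fin 3, ∑ α : Fin 3, ∑ β : Fin 3,
        P γ α β * pd γ w t x1 x2 * ξv α * ξv β := by
    refine Finset.sum_congr rfl fun γ _ => Finset.sum_congr rfl fun α _ =>
      Finset.sum_congr rfl fun β _ => ?_
    rw [hξe α, hξe β]
  have split := sum3_split P ξv Bv (fun γ => pd γ w t x1 x2) D hT
  -- bounds on the vectors
  have hξK : ∀ i : Fin 3, |ξv i| ≤ t / s := by
    intro i
    fin_cases i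
    · show |ξv 0| ≤ t / s
      simp only [hξdef, Matrix.cons_val_zero]
      rw [abs_of_pos (by positivity)]
    · show |ξv 1| ≤ t / s
      simp only [hξdef, Matrix.cons_val_one, Matrix.head_cons, Matrix.cons_val_zero]
      rw [abs_div, abs_of_pos hs0, abs_neg]
      gcongr
      linarith [hx1]
    · show |ξv 2| ≤ t / s
      simp only [hξdef, Matrix.cons_val_two, Matrix.tail_cons, Matrix.head_cons]
      rw [abs_div, abs_of_pos hs0, abs_neg]
      gcongr
      linarith [hx2]
  have hζK : ∀ i : Fin 3, |ζv i| ≤ t / s := by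
    intro i
    fin_cases i
    · show |ζv 0| ≤ t / s
      simp only [hζdef, Matrix.cons_val_zero]
      rw [abs_div, abs_of_nonneg hr0, abs_of_pos hs0]
      gcongr
    · show |ζv 1| ≤ t / s
      simp only [hζdef, Matrix.cons_val_one, Matrix.head_cons, Matrix.cons_val_zero]
      rw [abs_div, abs_of_pos hs0, abs_neg]
      gcongr
      linarith [hx1]
    · show |ζv 2| ≤ t / s
      simp only [hζdef, Matrix.cons_val_two, Matrix.tail_cons, Matrix.head_cons]
      rw [abs_div, abs_of_pos hs0, abs_neg]
      gcongr
      linarith [hx2]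
  have hdiff : ∀ i : Fin 3, |ξv i - ζv i| ≤ (t - r) / s := by
    intro i
    fin_cases i
    · show |ξv 0 - ζv 0| ≤ (t - r) / s
      simp only [hξdef, hζdef, Matrix.cons_val_zero]
      rw [div_sub_div_same, abs_of_nonneg (div_nonneg (by linarith) hs0.le)]
    · show |ξv 1 - ζv 1| ≤ (t - r) / s
      simp only [hξdef, hζdef, Matrix.cons_val_one, Matrix.head_cons, Matrix.cons_val_zero, sub_self, abs_zero]
      exact div_nonneg (by linarith) hs0.le
    · show |ξv 2 - ζv 2| ≤ (t - r) / s
      simp only [hξdef, hζdef, Matrix.cons_val_two, Matrix.tail_cons, Matrix.head_cons,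
        sub_self, abs_zero]
      exact div_nonneg (by linarith) hs0.le
  have hnull : ∑ γ : Fin 3, ∑ α : Fin 3, ∑ β : Fin 3,
      P γ α β * ζv γ * ζv α * ζv β = 0 := by
    refine hP ζv ?_
    simp only [hζdef, Matrix.cons_val_zero, Matrix.cons_val_one, Matrix.head_cons,
      Matrix.cons_val_two, Matrix.tail_cons]
    field_simp
    linarith [hr2]
  have hQ := cubic_bound P ξv ζv (t / s) ((t - r) / s)
    (div_nonneg (by linarith) hs0.le) hξK hζK hdiff hnull
  -- first term
  have hD : |D| ≤ A / t := hb.1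
  have hpow : (0:ℝ) < s ^ (δ - 1) := Real.rpow_pos_of_pos hs0 _
  have hinv : 1 / s ≤ s ^ (δ - 1) := by
    rw [one_div, ← Real.rpow_neg_one]
    exact Real.rpow_le_rpow_of_exponent_le hs1 (by linarith)
  have hdle : (t - r) / s ≤ s / t := by
    rw [div_le_div_iff₀ hs0 ht0]
    nlinarith [hs2, hr2, hrt, hr0, ht0]
  have term1 : |D * (∑ γ : Fin 3, ∑ α : Fin 3, ∑ β : Fin 3,
      P γ α β * ξv γ * ξv α * ξv β)| ≤ 3 * M * A * s ^ (δ - 1) := by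
    rw [abs_mul]
    calc |D| * |∑ γ : Fin 3, ∑ α : Fin 3, ∑ β : Fin 3, P γ α β * ξv γ * ξv α * ξv β|
        ≤ (A / t) * (M * (3 * ((t - r) / s * (t / s) ^ 2))) :=
          mul_le_mul hD hQ (abs_nonneg _) (by positivity)
      _ ≤ (A / t) * (M * (3 * (s / t * (t / s) ^ 2))) := by gcongr
      _ = 3 * M * A * (1 / s) := by field_simp
      _ ≤ 3 * M * A * s ^ (δ - 1) := by gcongr
  -- second term
  have hBb : ∀ γ : Fin 3, |Bv γ| ≤ A * s ^ (δ - 1) / t := by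
    intro γ
    fin_cases γ
    · show |Bv 0| ≤ A * s ^ (δ - 1) / t
      simp only [hBdef, Matrix.cons_val_zero, abs_zero]
      positivity
    · show |Bv 1| ≤ A * s ^ (δ - 1) / t
      simp only [hBdef, Matrix.cons_val_one, Matrix.head_cons, Matrix.cons_val_zero]
      exact hb.2.1
    · show |Bv 2| ≤ A * s ^ (δ - 1) / t
      simp only [hBdef, Matrix.cons_val_two, Matrix.tail_cons, Matrix.head_cons]
      exact hb.2.2
  have hS2 := sum2_bound P Bv ξv (t / s) (A * s ^ (δ - 1) / t) (by positivity)
    (by positivity) hBb hξK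
  have term2 : |∑ γ : Fin 3, ∑ α : Fin 3, ∑ β : Fin 3,
      P γ α β * Bv γ * ξv α * ξv β| ≤ M * A * s ^ (δ - 1) := by
    refine hS2.trans ?_
    have e : M * (A * s ^ (δ - 1) / t * (t / s) ^ 2)
        = M * A * s ^ (δ - 1) * (t / s ^ 2) := by field_simp
    rw [e]
    calc M * A * s ^ (δ - 1) * (t / s ^ 2) ≤ M * A * s ^ (δ - 1) * 1 := by
          gcongr
          rw [div_le_one (by positivity)]
          exact hts2
      _ = M * A * s ^ (δ - 1) := by ring
  -- combine
  rw [grw, split]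
  calc |D * (∑ γ : Fin 3, ∑ α : Fin 3, ∑ β : Fin 3, P γ α β * ξv γ * ξv α * ξv β)
        + ∑ γ : Fin 3, ∑ α : Fin 3, ∑ β : Fin 3, P γ α β * Bv γ * ξv α * ξv β|
      ≤ 3 * M * A * s ^ (δ - 1) + M * A * s ^ (δ - 1) :=
        (abs_add_le _ _).trans (by linarith)
    _ ≤ (4 * M + 1) * A * s ^ (δ - 1) := by nlinarith
end

section
/- Derivative bounds of the null coefficient: if P^{γαβ} satisfies the null condition, then on K = {t ≥ |x|+1}, |∂ₛ(P^{γαβ}Ψ⁰_γΨ⁰_αΨ⁰_β)| ≤ C·t/s² and |∂̄ₐ(P^{γαβ}Ψ⁰_γΨ⁰_αΨ⁰_β)| ≤ C/s, where Ψ⁰₀ = t/s, Ψ⁰ₐ = -xₐ/s, and C depends only on the P coefficients. -/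
set_option maxHeartbeats 1000000


/-- The null coefficient `P^{γαβ}Ψ⁰_γΨ⁰_αΨ⁰_β` as a function of the
hyperboloidal coordinates `(s, x₁, x₂)`, with `t = √(s² + |x|²)`,
`Ψ⁰₀ = t/s`, `Ψ⁰ₐ = -xₐ/s`. -/
noncomputable def Qcoef (P : Fin 3 → Fin 3 → Fin 3 → ℝ) (s x1 x2 : ℝ) : ℝ :=
  ∑ γ : Fin 3, ∑ α : Fin 3, ∑ β : Fin 3,
    P γ α β * (![Real.sqrt (s ^ 2 + x1 ^ 2 + x2 ^ 2), -x1, -x2] γ / s)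
      * (![Real.sqrt (s ^ 2 + x1 ^ 2 + x2 ^ 2), -x1, -x2] α / s)
      * (![Real.sqrt (s ^ 2 + x1 ^ 2 + x2 ^ 2), -x1, -x2] β / s)

lemma factor (P : Fin 3 → Fin 3 → Fin 3 → ℝ) (hP : NullCond P) (x1 x2 t : ℝ) :
    ∑ γ : Fin 3, ∑ α : Fin 3, ∑ β : Fin 3,
      P γ α β * ![t, -x1, -x2] γ * ![t, -x1, -x2] α * ![t, -x1, -x2] β
    = (t ^ 2 - x1 ^ 2 - x2 ^ 2) *
        (P 0 0 0 * t - ((P 0 0 1 + P 0 1 0 + P 1 0 0) * x1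
          + (P 0 0 2 + P 0 2 0 + P 2 0 0) * x2)) := by
  set ρ : ℝ := Real.sqrt (x1 ^ 2 + x2 ^ 2) with hρ
  have hρ2 : ρ ^ 2 = x1 ^ 2 + x2 ^ 2 := Real.sq_sqrt (by positivity)
  have h1 := hP ![ρ, x1, x2] (by simpa using hρ2)
  have h2 := hP ![-ρ, x1, x2] (by simpa using hρ2)
  simp only [Fin.sum_univ_three, Matrix.cons_val_zero, Matrix.cons_val_one,
    Matrix.head_cons, Matrix.cons_val_two, Matrix.tail_cons] at h1 h2 ⊢
  by_cases hz : ρ = 0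
  · have hx : x1 ^ 2 + x2 ^ 2 = 0 := by rw [← hρ2, hz]; ring
    have hx1 : x1 = 0 := by nlinarith [sq_nonneg x1, sq_nonneg x2]
    have hx2 : x2 = 0 := by nlinarith [sq_nonneg x1, sq_nonneg x2]
    subst hx1; subst hx2
    ring
  · have hG : ρ * ((t ^ 2 - x1 ^ 2 - x2 ^ 2) *
        (P 0 0 0 * t - ((P 0 0 1 + P 0 1 0 + P 1 0 0) * x1
          + (P 0 0 2 + P 0 2 0 + P 2 0 0) * x2))
        - (P 0 0 0 * t * t * t + P 0 0 1 * t * t * -x1 + P 0 0 2 * t * t * -x2 +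
            (P 0 1 0 * t * -x1 * t + P 0 1 1 * t * -x1 * -x1 + P 0 1 2 * t * -x1 * -x2) +
            (P 0 2 0 * t * -x2 * t + P 0 2 1 * t * -x2 * -x1 + P 0 2 2 * t * -x2 * -x2) +
          (P 1 0 0 * -x1 * t * t + P 1 0 1 * -x1 * t * -x1 + P 1 0 2 * -x1 * t * -x2 +
            (P 1 1 0 * -x1 * -x1 * t + P 1 1 1 * -x1 * -x1 * -x1 + P 1 1 2 * -x1 * -x1 * -x2) +
            (P 1 2 0 * -x1 * -x2 * t + P 1 2 1 * -x1 * -x2 * -x1 + P 1 2 2 * -x1 * -x2 * -x2)) +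
          (P 2 0 0 * -x2 * t * t + P 2 0 1 * -x2 * t * -x1 + P 2 0 2 * -x2 * t * -x2 +
            (P 2 1 0 * -x2 * -x1 * t + P 2 1 1 * -x2 * -x1 * -x1 + P 2 1 2 * -x2 * -x1 * -x2) +
            (P 2 2 0 * -x2 * -x2 * t + P 2 2 1 * -x2 * -x2 * -x1 + P 2 2 2 * -x2 * -x2 * -x2)))) = 0 := by
      linear_combination (ρ / 2 - t / 2) * h1 + (t / 2 + ρ / 2) * h2 +
        (t * ρ * P 0 0 0 -
          ρ * (((P 0 0 1 + P 0 1 0 + P 1 0 0) * x1 + (P 0 0 2 + P 0 2 0 + P 2 0 0) * x2))) * hρ2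
    rcases mul_eq_zero.mp hG with h | h
    · exact absurd h hz
    · linarith

lemma qrep (P : Fin 3 → Fin 3 → Fin 3 → ℝ) (hP : NullCond P) (s x1 x2 : ℝ) (hs : s ≠ 0) :
    Qcoef P s x1 x2 = (P 0 0 0 * Real.sqrt (s ^ 2 + x1 ^ 2 + x2 ^ 2)
      - ((P 0 0 1 + P 0 1 0 + P 1 0 0) * x1 + (P 0 0 2 + P 0 2 0 + P 2 0 0) * x2)) / s := by
  have ht2 : Real.sqrt (s ^ 2 + x1 ^ 2 + x2 ^ 2) ^ 2 = s ^ 2 + x1 ^ 2 + x2 ^ 2 :=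
    Real.sq_sqrt (by positivity)
  have hfac := factor P hP x1 x2 (Real.sqrt (s ^ 2 + x1 ^ 2 + x2 ^ 2))
  unfold Qcoef
  set t := Real.sqrt (s ^ 2 + x1 ^ 2 + x2 ^ 2) with htdef
  simp only [Fin.sum_univ_three, Matrix.cons_val_zero, Matrix.cons_val_one,
    Matrix.head_cons, Matrix.cons_val_two, Matrix.tail_cons] at hfac ⊢
  field_simp
  linear_combination (1 : ℝ) * hfac + 1 * (P 0 0 0 * t - ((P 0 0 1 + P 0 1 0 + P 1 0 0) * x1
    + (P 0 0 2 + P 0 2 0 + P 2 0 0) * x2)) * ht2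

theorem stmt15 (P : Fin 3 → Fin 3 → Fin 3 → ℝ) (hP : NullCond P) :
    ∃ C > (0 : ℝ), ∀ s x1 x2 : ℝ, 1 ≤ s →
      Real.sqrt (x1 ^ 2 + x2 ^ 2) + 1 ≤ Real.sqrt (s ^ 2 + x1 ^ 2 + x2 ^ 2) →
      |deriv (fun σ => Qcoef P σ x1 x2) s|
          ≤ C * Real.sqrt (s ^ 2 + x1 ^ 2 + x2 ^ 2) / s ^ 2 ∧
      |deriv (fun y => Qcoef P s y x2) x1| ≤ C / s ∧
      |deriv (fun y => Qcoef P s x1 y) x2| ≤ C / s := by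
  set a := P 0 0 0 with ha
  set b1 := P 0 0 1 + P 0 1 0 + P 1 0 0 with hb1
  set b2 := P 0 0 2 + P 0 2 0 + P 2 0 0 with hb2
  refine ⟨|a| + |b1| + |b2| + 1, by positivity, ?_⟩
  intro s x1 x2 hs _hK
  have hs0 : (0:ℝ) < s := lt_of_lt_of_le one_pos hs
  set t := Real.sqrt (s ^ 2 + x1 ^ 2 + x2 ^ 2) with htdef
  have hRpos : (0:ℝ) < s ^ 2 + x1 ^ 2 + x2 ^ 2 := by positivity
  have ht2 : t ^ 2 = s ^ 2 + x1 ^ 2 + x2 ^ 2 := Real.sq_sqrt hRpos.le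
  have htpos : (0:ℝ) < t := Real.sqrt_pos.mpr hRpos
  have ht1 : (1:ℝ) ≤ t := by
    rw [htdef]
    have : (1:ℝ) = Real.sqrt 1 := (Real.sqrt_one).symm
    rw [this]
    apply Real.sqrt_le_sqrt; nlinarith
  have habs : ∀ y : ℝ, y ^ 2 ≤ t ^ 2 → |y| ≤ t := by
    intro y hy
    have := Real.sqrt_le_sqrt hy
    rwa [Real.sqrt_sq_eq_abs, Real.sqrt_sq htpos.le] at this
  have hx1t : |x1| ≤ t := habs x1 (by nlinarith)
  have hx2t : |x2| ≤ t := habs x2 (by nlinarith)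
  -- derivative of sqrt(σ² + x1² + x2²) in each slot
  have hsqrt_s : HasDerivAt (fun σ : ℝ => Real.sqrt (σ ^ 2 + x1 ^ 2 + x2 ^ 2))
      (1 / (2 * t) * (2 * s)) s := by
    have hin : HasDerivAt (fun σ : ℝ => σ ^ 2 + x1 ^ 2 + x2 ^ 2) (2 * s) s := by
      simpa using ((hasDerivAt_pow 2 s).add_const (x1 ^ 2)).add_const (x2 ^ 2)
    exact (Real.hasDerivAt_sqrt hRpos.ne').comp s hin
  have hsqrt_1 : HasDerivAt (fun y : ℝ => Real.sqrt (s ^ 2 + y ^ 2 + x2 ^ 2))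
      (1 / (2 * t) * (2 * x1)) x1 := by
    have hin : HasDerivAt (fun y : ℝ => s ^ 2 + y ^ 2 + x2 ^ 2) (2 * x1) x1 := by
      simpa using (((hasDerivAt_pow 2 x1).const_add (s ^ 2)).add_const (x2 ^ 2))
    exact (Real.hasDerivAt_sqrt hRpos.ne').comp x1 hin
  have hsqrt_2 : HasDerivAt (fun y : ℝ => Real.sqrt (s ^ 2 + x1 ^ 2 + y ^ 2))
      (1 / (2 * t) * (2 * x2)) x2 := by
    have hin : HasDerivAt (fun y : ℝ => s ^ 2 + x1 ^ 2 + y ^ 2) (2 * x2) x2 := by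
      simpa using ((hasDerivAt_pow 2 x2).const_add (s ^ 2 + x1 ^ 2))
    exact (Real.hasDerivAt_sqrt hRpos.ne').comp x2 hin
  refine ⟨?_, ?_, ?_⟩
  · -- s derivative
    have heq : (fun σ => Qcoef P σ x1 x2) =ᶠ[nhds s]
        (fun σ => (a * Real.sqrt (σ ^ 2 + x1 ^ 2 + x2 ^ 2) - (b1 * x1 + b2 * x2)) / σ) := by
      filter_upwards [eventually_gt_nhds hs0] with σ hσ
      exact qrep P hP σ x1 x2 hσ.ne'
    rw [heq.deriv_eq]
    have hg : HasDerivAt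
        (fun σ => (a * Real.sqrt (σ ^ 2 + x1 ^ 2 + x2 ^ 2) - (b1 * x1 + b2 * x2)) / σ)
        (((a * (1 / (2 * t) * (2 * s))) * s -
          (a * t - (b1 * x1 + b2 * x2)) * 1) / s ^ 2) s := by
      exact ((hsqrt_s.const_mul a).sub_const (b1 * x1 + b2 * x2)).div (hasDerivAt_id s) hs0.ne'
    rw [hg.deriv]
    have hnum : a * (1 / (2 * t) * (2 * s)) * s - (a * t - (b1 * x1 + b2 * x2)) * 1
        = a * (s ^ 2 - t ^ 2) / t + (b1 * x1 + b2 * x2) := by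
      field_simp; ring
    rw [hnum, abs_div, abs_of_pos (by positivity : (0:ℝ) < s ^ 2)]
    rw [div_le_div_iff₀ (by positivity) (by positivity)]
    have h1 : |a * (s ^ 2 - t ^ 2) / t + (b1 * x1 + b2 * x2)| ≤ (|a| + |b1| + |b2| + 1) * t := by
      have e1 : |a * (s ^ 2 - t ^ 2) / t| ≤ |a| * t := by
        rw [abs_div, abs_mul, abs_of_pos htpos]
        rw [div_le_iff₀ htpos]
        have : |s ^ 2 - t ^ 2| = t ^ 2 - s ^ 2 := by
          rw [abs_sub_comm, abs_of_nonneg]; nlinarith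
        rw [this]
        have : t ^ 2 - s ^ 2 ≤ t * t := by nlinarith
        nlinarith [abs_nonneg a, this]
      have e2 : |b1 * x1 + b2 * x2| ≤ (|b1| + |b2|) * t := by
        calc |b1 * x1 + b2 * x2| ≤ |b1| * |x1| + |b2| * |x2| := by
              exact (abs_add_le _ _).trans (by rw [abs_mul, abs_mul])
          _ ≤ |b1| * t + |b2| * t := by gcongr
          _ = (|b1| + |b2|) * t := by ring
      calc |a * (s ^ 2 - t ^ 2) / t + (b1 * x1 + b2 * x2)|
          ≤ |a * (s ^ 2 - t ^ 2) / t| + |b1 * x1 + b2 * x2| := abs_add_le _ _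
        _ ≤ |a| * t + (|b1| + |b2|) * t := add_le_add e1 e2
        _ ≤ (|a| + |b1| + |b2| + 1) * t := by nlinarith [abs_nonneg a, abs_nonneg b1, abs_nonneg b2]
    calc |a * (s ^ 2 - t ^ 2) / t + (b1 * x1 + b2 * x2)| * s ^ 2
        ≤ ((|a| + |b1| + |b2| + 1) * t) * s ^ 2 := by
          gcongr
      _ = (|a| + |b1| + |b2| + 1) * t * s ^ 2 := by ring
  · -- x1 derivative
    have heq : (fun y => Qcoef P s y x2)
        = fun y => (a * Real.sqrt (s ^ 2 + y ^ 2 + x2 ^ 2) - (b1 * y + b2 * x2)) / s :=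
      funext fun y => qrep P hP s y x2 hs0.ne'
    rw [heq]
    have hg : HasDerivAt
        (fun y => (a * Real.sqrt (s ^ 2 + y ^ 2 + x2 ^ 2) - (b1 * y + b2 * x2)) / s)
        ((a * (1 / (2 * t) * (2 * x1)) - b1) / s) x1 := by
      have hlin : HasDerivAt (fun y : ℝ => b1 * y + b2 * x2) b1 x1 := by
        simpa using ((hasDerivAt_id x1).const_mul b1).add_const (b2 * x2)
      exact ((hsqrt_1.const_mul a).sub hlin).div_const s
    have hval : a * (1 / (2 * t) * (2 * x1)) - b1 = a * x1 / t - b1 := by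
      field_simp
    rw [hg.deriv, hval, abs_div, abs_of_pos hs0]
    gcongr
    calc |a * x1 / t - b1| ≤ |a * x1 / t| + |b1| := abs_sub _ _
      _ ≤ |a| + |b1| := by
          have h3 : |a * x1 / t| = |a| * |x1| / t := by rw [abs_div, abs_mul, abs_of_pos htpos]
          have h4 : |a| * |x1| / t ≤ |a| := by
            rw [div_le_iff₀ htpos]; nlinarith [abs_nonneg a, hx1t, abs_nonneg x1]
          rw [h3]; linarith
      _ ≤ |a| + |b1| + |b2| + 1 := by have := abs_nonneg b2; linarith
  · -- x2 derivative
    have heq : (fun y => Qcoef P s x1 y)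
        = fun y => (a * Real.sqrt (s ^ 2 + x1 ^ 2 + y ^ 2) - (b1 * x1 + b2 * y)) / s :=
      funext fun y => qrep P hP s x1 y hs0.ne'
    rw [heq]
    have hg : HasDerivAt
        (fun y => (a * Real.sqrt (s ^ 2 + x1 ^ 2 + y ^ 2) - (b1 * x1 + b2 * y)) / s)
        ((a * (1 / (2 * t) * (2 * x2)) - b2) / s) x2 := by
      have hlin : HasDerivAt (fun y : ℝ => b1 * x1 + b2 * y) b2 x2 := by
        simpa using (((hasDerivAt_id x2).const_mul b2).const_add (b1 * x1))
      exact ((hsqrt_2.const_mul a).sub hlin).div_const s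
    have hval : a * (1 / (2 * t) * (2 * x2)) - b2 = a * x2 / t - b2 := by
      field_simp
    rw [hg.deriv, hval, abs_div, abs_of_pos hs0]
    gcongr
    calc |a * x2 / t - b2| ≤ |a * x2 / t| + |b2| := abs_sub _ _
      _ ≤ |a| + |b2| := by
          have h3 : |a * x2 / t| = |a| * |x2| / t := by rw [abs_div, abs_mul, abs_of_pos htpos]
          have h4 : |a| * |x2| / t ≤ |a| := by
            rw [div_le_iff₀ htpos]; nlinarith [abs_nonneg a, hx2t, abs_nonneg x2]
          rw [h3]; linarith
      _ ≤ |a| + |b1| + |b2| + 1 := by have := abs_nonneg b1; linarith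
end
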